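/- The Merge rule is admissible in RTB: if G//Γ₁⇒Δ₁//Γ₂⇒Δ₂//G' is derivable in RTB then G//Γ₁,Γ₂⇒Δ₁,Δ₂//G' is derivable in RTB. -/
import Mathlib


inductive Fm where
  | atom : ℕ → Fm
  | neg : Fm → Fm
  | and : Fm → Fm → Fm
  | or : Fm → Fm → Fm
  | box : Fm → Fm
deriving DecidableEq

/-- A sequent is a pair of finite sets of formulas. -/
abbrev HSeq := Finset Fm × Finset Fm
/-- A hypersequent is a finite list of sequents. -/
abbrev Hyp := List HSeq

/-- Hypersequent derivability, parametrized by which optional rules are present: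
`cut` = the Cut rule, `ec` = external contraction, `ew` = insertion of an empty
sequent anywhere, `sym` = reversal of the hypersequent, `t` = the T rule. The
base rules (Id, EWL, EWR, TL, TR, ¬, ∧, ∨, □L, □R) are always present. -/
inductive Der (cut ec ew sym t : Bool) : Hyp → Prop
  | id (n : ℕ) : Der cut ec ew sym t [({Fm.atom n}, {Fm.atom n})]
  | cutR (hc : cut = true) (G H : Hyp) (Γ Δ : Finset Fm) (φ : Fm) :
      Der cut ec ew sym t (G ++ [(Γ, insert φ Δ)] ++ H) →
      Der cut ec ew sym t (G ++ [(insert φ Γ, Δ)] ++ H) →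
      Der cut ec ew sym t (G ++ [(Γ, Δ)] ++ H)
  | ewl (G : Hyp) : Der cut ec ew sym t G → Der cut ec ew sym t ((∅, ∅) :: G)
  | ewr (G : Hyp) : Der cut ec ew sym t G → Der cut ec ew sym t (G ++ [(∅, ∅)])
  | tl (G H : Hyp) (Γ Δ : Finset Fm) (φ : Fm) :
      Der cut ec ew sym t (G ++ [(Γ, Δ)] ++ H) →
      Der cut ec ew sym t (G ++ [(insert φ Γ, Δ)] ++ H)
  | tr (G H : Hyp) (Γ Δ : Finset Fm) (φ : Fm) :
      Der cut ec ew sym t (G ++ [(Γ, Δ)] ++ H) →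
      Der cut ec ew sym t (G ++ [(Γ, insert φ Δ)] ++ H)
  | negL (G H : Hyp) (Γ Δ : Finset Fm) (φ : Fm) :
      Der cut ec ew sym t (G ++ [(Γ, insert φ Δ)] ++ H) →
      Der cut ec ew sym t (G ++ [(insert (.neg φ) Γ, Δ)] ++ H)
  | negR (G H : Hyp) (Γ Δ : Finset Fm) (φ : Fm) :
      Der cut ec ew sym t (G ++ [(insert φ Γ, Δ)] ++ H) →
      Der cut ec ew sym t (G ++ [(Γ, insert (.neg φ) Δ)] ++ H)
  | andL1 (G H : Hyp) (Γ Δ : Finset Fm) (φ ψ : Fm) :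
      Der cut ec ew sym t (G ++ [(insert φ Γ, Δ)] ++ H) →
      Der cut ec ew sym t (G ++ [(insert (.and φ ψ) Γ, Δ)] ++ H)
  | andL2 (G H : Hyp) (Γ Δ : Finset Fm) (φ ψ : Fm) :
      Der cut ec ew sym t (G ++ [(insert ψ Γ, Δ)] ++ H) →
      Der cut ec ew sym t (G ++ [(insert (.and φ ψ) Γ, Δ)] ++ H)
  | andR (G H : Hyp) (Γ Δ : Finset Fm) (φ ψ : Fm) :
      Der cut ec ew sym t (G ++ [(Γ, insert φ Δ)] ++ H) →
      Der cut ec ew sym t (G ++ [(Γ, insert ψ Δ)] ++ H) →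
      Der cut ec ew sym t (G ++ [(Γ, insert (.and φ ψ) Δ)] ++ H)
  | orL (G H : Hyp) (Γ Δ : Finset Fm) (φ ψ : Fm) :
      Der cut ec ew sym t (G ++ [(insert φ Γ, Δ)] ++ H) →
      Der cut ec ew sym t (G ++ [(insert ψ Γ, Δ)] ++ H) →
      Der cut ec ew sym t (G ++ [(insert (.or φ ψ) Γ, Δ)] ++ H)
  | orR1 (G H : Hyp) (Γ Δ : Finset Fm) (φ ψ : Fm) :
      Der cut ec ew sym t (G ++ [(Γ, insert φ Δ)] ++ H) →
      Der cut ec ew sym t (G ++ [(Γ, insert (.or φ ψ) Δ)] ++ H)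
  | orR2 (G H : Hyp) (Γ Δ : Finset Fm) (φ ψ : Fm) :
      Der cut ec ew sym t (G ++ [(Γ, insert ψ Δ)] ++ H) →
      Der cut ec ew sym t (G ++ [(Γ, insert (.or φ ψ) Δ)] ++ H)
  | boxL (G H : Hyp) (Γ Δ Sg Λ : Finset Fm) (φ : Fm) :
      Der cut ec ew sym t (G ++ [(Γ, Δ), (insert φ Sg, Λ)] ++ H) →
      Der cut ec ew sym t (G ++ [(insert (.box φ) Γ, Δ), (Sg, Λ)] ++ H)
  | boxR (G : Hyp) (Γ Δ : Finset Fm) (φ : Fm) :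
      Der cut ec ew sym t (G ++ [(Γ, Δ), (∅, {φ})]) →
      Der cut ec ew sym t (G ++ [(Γ, insert (.box φ) Δ)])
  | ecR (he : ec = true) (G H : Hyp) (Γ Δ : Finset Fm) :
      Der cut ec ew sym t (G ++ [(Γ, Δ), (Γ, Δ)] ++ H) →
      Der cut ec ew sym t (G ++ [(Γ, Δ)] ++ H)
  | ewRule (he : ew = true) (G H : Hyp) :
      Der cut ec ew sym t (G ++ H) →
      Der cut ec ew sym t (G ++ [(∅, ∅)] ++ H)
  | symRule (hs : sym = true) (G : Hyp) :
      Der cut ec ew sym t G → Der cut ec ew sym t G.reverse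
  | tRule (ht : t = true) (G H : Hyp) (Γ Δ : Finset Fm) (φ : Fm) :
      Der cut ec ew sym t (G ++ [(insert φ Γ, Δ)] ++ H) →
      Der cut ec ew sym t (G ++ [(insert (.box φ) Γ, Δ)] ++ H)

/-- RTB: Id, Cut, EWL, EWR, TL, TR, rules for ¬,∧,∨, □L, □R, Sym and the T rule. -/
abbrev RTB : Hyp → Prop := Der true false false true true

section Helpers

lemma decomp1 {α : Type*} {A B G G' : List α} {x y : α}
    (h : A ++ x :: B = G ++ y :: G') :
    (∃ C, G = A ++ x :: C ∧ B = C ++ y :: G') ∨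
    (A = G ∧ x = y ∧ B = G') ∨
    (∃ C, A = G ++ y :: C ∧ G' = C ++ x :: B) := by
  rcases List.append_eq_append_iff.mp h with ⟨a', ha, hb⟩ | ⟨c', hc, hd⟩
  · cases a' with
    | nil =>
        simp at ha hb
        right; left; exact ⟨ha.symm, hb.1, hb.2⟩
    | cons z a'' =>
        simp at hb
        obtain ⟨hx, hB⟩ := hb
        left; exact ⟨a'', by rw [ha, hx], hB⟩
  · cases c' with
    | nil =>
        simp at hc hd
        right; left; exact ⟨hc, hd.1.symm, hd.2.symm⟩
    | cons z c'' =>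
        simp at hd
        obtain ⟨hy, hG'⟩ := hd
        right; right; exact ⟨c'', by rw [hc, hy], hG'⟩

lemma decompP {α : Type*} {A B G G' : List α} {x s₁ s₂ : α}
    (h : A ++ x :: B = G ++ s₁ :: s₂ :: G') :
    (∃ C, G = A ++ x :: C ∧ B = C ++ s₁ :: s₂ :: G') ∨
    (A = G ∧ x = s₁ ∧ B = s₂ :: G') ∨
    (A = G ++ [s₁] ∧ x = s₂ ∧ B = G') ∨
    (∃ C, A = G ++ s₁ :: s₂ :: C ∧ G' = C ++ x :: B) := by
  rcases decomp1 (G' := s₂ :: G') h with ⟨C, hG, hB⟩ | ⟨hA, hx, hB⟩ | ⟨C, hA, hG'⟩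
  · exact Or.inl ⟨C, hG, hB⟩
  · exact Or.inr (Or.inl ⟨hA, hx, hB⟩)
  · cases C with
    | nil =>
        simp at hG'
        exact Or.inr (Or.inr (Or.inl ⟨by simpa using hA, hG'.1.symm, hG'.2.symm⟩))
    | cons c C' =>
        simp at hG'
        obtain ⟨hc, hG'⟩ := hG'
        exact Or.inr (Or.inr (Or.inr ⟨C', by rw [hA, hc], hG'⟩))

end Helpers
section Rules

lemma cutR' (G H : Hyp) (Γ Δ : Finset Fm) (φ : Fm)
    (h1 : RTB (G ++ (Γ, insert φ Δ) :: H)) (h2 : RTB (G ++ (insert φ Γ, Δ) :: H)) :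
    RTB (G ++ (Γ, Δ) :: H) := by
  simpa using Der.cutR rfl G H Γ Δ φ (by simpa using h1) (by simpa using h2)

lemma tl' (G H : Hyp) (Γ Δ : Finset Fm) (φ : Fm)
    (h : RTB (G ++ (Γ, Δ) :: H)) : RTB (G ++ (insert φ Γ, Δ) :: H) := by
  simpa using Der.tl G H Γ Δ φ (by simpa using h)

lemma tr' (G H : Hyp) (Γ Δ : Finset Fm) (φ : Fm)
    (h : RTB (G ++ (Γ, Δ) :: H)) : RTB (G ++ (Γ, insert φ Δ) :: H) := by
  simpa using Der.tr G H Γ Δ φ (by simpa using h)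

lemma negL' (G H : Hyp) (Γ Δ : Finset Fm) (φ : Fm)
    (h : RTB (G ++ (Γ, insert φ Δ) :: H)) : RTB (G ++ (insert (.neg φ) Γ, Δ) :: H) := by
  simpa using Der.negL G H Γ Δ φ (by simpa using h)

lemma negR' (G H : Hyp) (Γ Δ : Finset Fm) (φ : Fm)
    (h : RTB (G ++ (insert φ Γ, Δ) :: H)) : RTB (G ++ (Γ, insert (.neg φ) Δ) :: H) := by
  simpa using Der.negR G H Γ Δ φ (by simpa using h)

lemma andL1' (G H : Hyp) (Γ Δ : Finset Fm) (φ ψ : Fm)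
    (h : RTB (G ++ (insert φ Γ, Δ) :: H)) : RTB (G ++ (insert (.and φ ψ) Γ, Δ) :: H) := by
  simpa using Der.andL1 G H Γ Δ φ ψ (by simpa using h)

lemma andL2' (G H : Hyp) (Γ Δ : Finset Fm) (φ ψ : Fm)
    (h : RTB (G ++ (insert ψ Γ, Δ) :: H)) : RTB (G ++ (insert (.and φ ψ) Γ, Δ) :: H) := by
  simpa using Der.andL2 G H Γ Δ φ ψ (by simpa using h)

lemma andR' (G H : Hyp) (Γ Δ : Finset Fm) (φ ψ : Fm)
    (h1 : RTB (G ++ (Γ, insert φ Δ) :: H)) (h2 : RTB (G ++ (Γ, insert ψ Δ) :: H)) :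
    RTB (G ++ (Γ, insert (.and φ ψ) Δ) :: H) := by
  simpa using Der.andR G H Γ Δ φ ψ (by simpa using h1) (by simpa using h2)

lemma orL' (G H : Hyp) (Γ Δ : Finset Fm) (φ ψ : Fm)
    (h1 : RTB (G ++ (insert φ Γ, Δ) :: H)) (h2 : RTB (G ++ (insert ψ Γ, Δ) :: H)) :
    RTB (G ++ (insert (.or φ ψ) Γ, Δ) :: H) := by
  simpa using Der.orL G H Γ Δ φ ψ (by simpa using h1) (by simpa using h2)

lemma orR1' (G H : Hyp) (Γ Δ : Finset Fm) (φ ψ : Fm)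
    (h : RTB (G ++ (Γ, insert φ Δ) :: H)) : RTB (G ++ (Γ, insert (.or φ ψ) Δ) :: H) := by
  simpa using Der.orR1 G H Γ Δ φ ψ (by simpa using h)

lemma orR2' (G H : Hyp) (Γ Δ : Finset Fm) (φ ψ : Fm)
    (h : RTB (G ++ (Γ, insert ψ Δ) :: H)) : RTB (G ++ (Γ, insert (.or φ ψ) Δ) :: H) := by
  simpa using Der.orR2 G H Γ Δ φ ψ (by simpa using h)

lemma boxL' (G H : Hyp) (Γ Δ Sg Λ : Finset Fm) (φ : Fm)
    (h : RTB (G ++ (Γ, Δ) :: (insert φ Sg, Λ) :: H)) :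
    RTB (G ++ (insert (.box φ) Γ, Δ) :: (Sg, Λ) :: H) := by
  simpa using Der.boxL G H Γ Δ Sg Λ φ (by simpa using h)

lemma tRule' (G H : Hyp) (Γ Δ : Finset Fm) (φ : Fm)
    (h : RTB (G ++ (insert φ Γ, Δ) :: H)) : RTB (G ++ (insert (.box φ) Γ, Δ) :: H) := by
  simpa using Der.tRule rfl G H Γ Δ φ (by simpa using h)

/-- A sequent-shape `u` commutes with unions on both sides. -/
def Lifts (u : Finset Fm → Finset Fm → HSeq) : Prop :=
  ∀ Γ Δ Γ' Δ' : Finset Fm,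
    ((u Γ Δ).1 ∪ Γ', (u Γ Δ).2 ∪ Δ') = u (Γ ∪ Γ') (Δ ∪ Δ') ∧
    (Γ' ∪ (u Γ Δ).1, Δ' ∪ (u Γ Δ).2) = u (Γ' ∪ Γ) (Δ' ∪ Δ)

lemma liftsId : Lifts (fun Γ Δ => (Γ, Δ)) := by
  intro Γ Δ Γ' Δ'; exact ⟨rfl, rfl⟩

lemma liftsInsL (χ : Fm) : Lifts (fun Γ Δ => (insert χ Γ, Δ)) := by
  intro Γ Δ Γ' Δ'
  constructor <;> simp [Finset.insert_union, Finset.union_insert]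

lemma liftsInsR (χ : Fm) : Lifts (fun Γ Δ => (Γ, insert χ Δ)) := by
  intro Γ Δ Γ' Δ'
  constructor <;> simp [Finset.insert_union, Finset.union_insert]

end Rules
section Steps

lemma step1 (u v : Finset Fm → Finset Fm → HSeq)
    (hu : Lifts u) (hv : Lifts v)
    (rule : ∀ G H Γ Δ, RTB (G ++ u Γ Δ :: H) → RTB (G ++ v Γ Δ :: H))
    (Gr Hr : Hyp) (Γ Δ : Finset Fm)
    (ih : ∀ G G' (Γ₁ Δ₁ Γ₂ Δ₂ : Finset Fm),
        Gr ++ u Γ Δ :: Hr = G ++ (Γ₁, Δ₁) :: (Γ₂, Δ₂) :: G' →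
        RTB (G ++ (Γ₁ ∪ Γ₂, Δ₁ ∪ Δ₂) :: G'))
    (G G' : Hyp) (Γ₁ Δ₁ Γ₂ Δ₂ : Finset Fm)
    (hK : Gr ++ v Γ Δ :: Hr = G ++ (Γ₁, Δ₁) :: (Γ₂, Δ₂) :: G') :
    RTB (G ++ (Γ₁ ∪ Γ₂, Δ₁ ∪ Δ₂) :: G') := by
  rcases decompP hK with ⟨C, hG, hB⟩ | ⟨hA, hx, hB⟩ | ⟨hA, hx, hB⟩ | ⟨C, hA, hB⟩
  · subst hG; subst hB
    have h1 := ih (Gr ++ u Γ Δ :: C) G' Γ₁ Δ₁ Γ₂ Δ₂ (by simp)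
    have h2 := rule Gr (C ++ (Γ₁ ∪ Γ₂, Δ₁ ∪ Δ₂) :: G') Γ Δ (by simpa using h1)
    simpa using h2
  · have e1 : (v Γ Δ).1 = Γ₁ := by rw [hx]
    have e2 : (v Γ Δ).2 = Δ₁ := by rw [hx]
    rw [← hA, ← e1, ← e2, (hv Γ Δ Γ₂ Δ₂).1]
    refine rule Gr G' (Γ ∪ Γ₂) (Δ ∪ Δ₂) ?_
    rw [← (hu Γ Δ Γ₂ Δ₂).1]
    exact ih Gr G' (u Γ Δ).1 (u Γ Δ).2 Γ₂ Δ₂ (by simp [hB])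
  · have e1 : (v Γ Δ).1 = Γ₂ := by rw [hx]
    have e2 : (v Γ Δ).2 = Δ₂ := by rw [hx]
    rw [← e1, ← e2, (hv Γ Δ Γ₁ Δ₁).2]
    refine rule G G' (Γ₁ ∪ Γ) (Δ₁ ∪ Δ) ?_
    rw [← (hu Γ Δ Γ₁ Δ₁).2]
    exact ih G G' Γ₁ Δ₁ (u Γ Δ).1 (u Γ Δ).2 (by simp [hA, hB])
  · subst hA; subst hB
    have h1 := ih G (C ++ u Γ Δ :: Hr) Γ₁ Δ₁ Γ₂ Δ₂ (by simp)
    have h2 := rule (G ++ (Γ₁ ∪ Γ₂, Δ₁ ∪ Δ₂) :: C) Hr Γ Δ (by simpa using h1)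
    simpa using h2

lemma step2 (u₁ u₂ v : Finset Fm → Finset Fm → HSeq)
    (hu₁ : Lifts u₁) (hu₂ : Lifts u₂) (hv : Lifts v)
    (rule : ∀ G H Γ Δ, RTB (G ++ u₁ Γ Δ :: H) → RTB (G ++ u₂ Γ Δ :: H) →
        RTB (G ++ v Γ Δ :: H))
    (Gr Hr : Hyp) (Γ Δ : Finset Fm)
    (ih₁ : ∀ G G' (Γ₁ Δ₁ Γ₂ Δ₂ : Finset Fm),
        Gr ++ u₁ Γ Δ :: Hr = G ++ (Γ₁, Δ₁) :: (Γ₂, Δ₂) :: G' →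
        RTB (G ++ (Γ₁ ∪ Γ₂, Δ₁ ∪ Δ₂) :: G'))
    (ih₂ : ∀ G G' (Γ₁ Δ₁ Γ₂ Δ₂ : Finset Fm),
        Gr ++ u₂ Γ Δ :: Hr = G ++ (Γ₁, Δ₁) :: (Γ₂, Δ₂) :: G' →
        RTB (G ++ (Γ₁ ∪ Γ₂, Δ₁ ∪ Δ₂) :: G'))
    (G G' : Hyp) (Γ₁ Δ₁ Γ₂ Δ₂ : Finset Fm)
    (hK : Gr ++ v Γ Δ :: Hr = G ++ (Γ₁, Δ₁) :: (Γ₂, Δ₂) :: G') :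
    RTB (G ++ (Γ₁ ∪ Γ₂, Δ₁ ∪ Δ₂) :: G') := by
  rcases decompP hK with ⟨C, hG, hB⟩ | ⟨hA, hx, hB⟩ | ⟨hA, hx, hB⟩ | ⟨C, hA, hB⟩
  · subst hG; subst hB
    have h1 := ih₁ (Gr ++ u₁ Γ Δ :: C) G' Γ₁ Δ₁ Γ₂ Δ₂ (by simp)
    have h2 := ih₂ (Gr ++ u₂ Γ Δ :: C) G' Γ₁ Δ₁ Γ₂ Δ₂ (by simp)
    have h3 := rule Gr (C ++ (Γ₁ ∪ Γ₂, Δ₁ ∪ Δ₂) :: G') Γ Δ (by simpa using h1)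
      (by simpa using h2)
    simpa using h3
  · have e1 : (v Γ Δ).1 = Γ₁ := by rw [hx]
    have e2 : (v Γ Δ).2 = Δ₁ := by rw [hx]
    rw [← hA, ← e1, ← e2, (hv Γ Δ Γ₂ Δ₂).1]
    refine rule Gr G' (Γ ∪ Γ₂) (Δ ∪ Δ₂) ?_ ?_
    · rw [← (hu₁ Γ Δ Γ₂ Δ₂).1]
      exact ih₁ Gr G' (u₁ Γ Δ).1 (u₁ Γ Δ).2 Γ₂ Δ₂ (by simp [hB])
    · rw [← (hu₂ Γ Δ Γ₂ Δ₂).1]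
      exact ih₂ Gr G' (u₂ Γ Δ).1 (u₂ Γ Δ).2 Γ₂ Δ₂ (by simp [hB])
  · have e1 : (v Γ Δ).1 = Γ₂ := by rw [hx]
    have e2 : (v Γ Δ).2 = Δ₂ := by rw [hx]
    rw [← e1, ← e2, (hv Γ Δ Γ₁ Δ₁).2]
    refine rule G G' (Γ₁ ∪ Γ) (Δ₁ ∪ Δ) ?_ ?_
    · rw [← (hu₁ Γ Δ Γ₁ Δ₁).2]
      exact ih₁ G G' Γ₁ Δ₁ (u₁ Γ Δ).1 (u₁ Γ Δ).2 (by simp [hA, hB])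
    · rw [← (hu₂ Γ Δ Γ₁ Δ₁).2]
      exact ih₂ G G' Γ₁ Δ₁ (u₂ Γ Δ).1 (u₂ Γ Δ).2 (by simp [hA, hB])
  · subst hA; subst hB
    have h1 := ih₁ G (C ++ u₁ Γ Δ :: Hr) Γ₁ Δ₁ Γ₂ Δ₂ (by simp)
    have h2 := ih₂ G (C ++ u₂ Γ Δ :: Hr) Γ₁ Δ₁ Γ₂ Δ₂ (by simp)
    have h3 := rule (G ++ (Γ₁ ∪ Γ₂, Δ₁ ∪ Δ₂) :: C) Hr Γ Δ (by simpa using h1)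
      (by simpa using h2)
    simpa using h3

end Steps
lemma merge_aux {K : Hyp} (h : RTB K) :
    ∀ (G G' : Hyp) (Γ₁ Δ₁ Γ₂ Δ₂ : Finset Fm),
      K = G ++ (Γ₁, Δ₁) :: (Γ₂, Δ₂) :: G' →
      RTB (G ++ (Γ₁ ∪ Γ₂, Δ₁ ∪ Δ₂) :: G') := by
  induction h with
  | id n =>
      intro G G' Γ₁ Δ₁ Γ₂ Δ₂ hK
      exfalso
      rcases G with _ | ⟨g, Gt⟩ <;> simp at hK
  | cutR hc Gr Hr Γ Δ φ h1 h2 ih1 ih2 =>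
      simp only [List.append_assoc, List.cons_append, List.nil_append] at ih1 ih2 ⊢
      exact step2 (fun Γ Δ => (Γ, insert φ Δ)) (fun Γ Δ => (insert φ Γ, Δ))
        (fun Γ Δ => (Γ, Δ)) (liftsInsR φ) (liftsInsL φ) liftsId
        (fun G H Γ Δ => cutR' G H Γ Δ φ) Gr Hr Γ Δ ih1 ih2
  | ewl Gr h ih =>
      intro G G' Γ₁ Δ₁ Γ₂ Δ₂ hK
      rcases G with _ | ⟨g, Gt⟩
      · simp at hK
        obtain ⟨⟨h1, h2⟩, hG⟩ := hK
        subst h1; subst h2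
        simpa [hG.symm] using h
      · simp at hK
        obtain ⟨hg, hG⟩ := hK
        rw [← hg]
        exact Der.ewl _ (ih Gt G' Γ₁ Δ₁ Γ₂ Δ₂ hG)
  | ewr Gr h ih =>
      intro G G' Γ₁ Δ₁ Γ₂ Δ₂ hK
      rcases decompP hK with ⟨C, hG, hB⟩ | ⟨hA, hx, hB⟩ | ⟨hA, hx, hB⟩ | ⟨C, hA, hB⟩
      · simp at hB
      · simp at hB
      · rw [Prod.mk.injEq] at hx
        obtain ⟨e1, e2⟩ := hx
        subst e1; subst e2
        have h0 := h
        rw [hA] at h0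
        simpa [← hB] using h0
      · have h1 := ih G C Γ₁ Δ₁ Γ₂ Δ₂ hA
        have h2 := Der.ewr _ h1
        simpa [hB] using h2
  | tl Gr Hr Γ Δ φ h ih =>
      simp only [List.append_assoc, List.cons_append, List.nil_append] at ih ⊢
      exact step1 (fun Γ Δ => (Γ, Δ)) (fun Γ Δ => (insert φ Γ, Δ)) liftsId
        (liftsInsL φ) (fun G H Γ Δ => tl' G H Γ Δ φ) Gr Hr Γ Δ ih
  | tr Gr Hr Γ Δ φ h ih =>
      simp only [List.append_assoc, List.cons_append, List.nil_append] at ih ⊢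
      exact step1 (fun Γ Δ => (Γ, Δ)) (fun Γ Δ => (Γ, insert φ Δ)) liftsId
        (liftsInsR φ) (fun G H Γ Δ => tr' G H Γ Δ φ) Gr Hr Γ Δ ih
  | negL Gr Hr Γ Δ φ h ih =>
      simp only [List.append_assoc, List.cons_append, List.nil_append] at ih ⊢
      exact step1 (fun Γ Δ => (Γ, insert φ Δ)) (fun Γ Δ => (insert (.neg φ) Γ, Δ))
        (liftsInsR φ) (liftsInsL _) (fun G H Γ Δ => negL' G H Γ Δ φ) Gr Hr Γ Δ ih
  | negR Gr Hr Γ Δ φ h ih =>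
      simp only [List.append_assoc, List.cons_append, List.nil_append] at ih ⊢
      exact step1 (fun Γ Δ => (insert φ Γ, Δ)) (fun Γ Δ => (Γ, insert (.neg φ) Δ))
        (liftsInsL φ) (liftsInsR _) (fun G H Γ Δ => negR' G H Γ Δ φ) Gr Hr Γ Δ ih
  | andL1 Gr Hr Γ Δ φ ψ h ih =>
      simp only [List.append_assoc, List.cons_append, List.nil_append] at ih ⊢
      exact step1 (fun Γ Δ => (insert φ Γ, Δ)) (fun Γ Δ => (insert (.and φ ψ) Γ, Δ))
        (liftsInsL φ) (liftsInsL _) (fun G H Γ Δ => andL1' G H Γ Δ φ ψ) Gr Hr Γ Δ ih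
  | andL2 Gr Hr Γ Δ φ ψ h ih =>
      simp only [List.append_assoc, List.cons_append, List.nil_append] at ih ⊢
      exact step1 (fun Γ Δ => (insert ψ Γ, Δ)) (fun Γ Δ => (insert (.and φ ψ) Γ, Δ))
        (liftsInsL ψ) (liftsInsL _) (fun G H Γ Δ => andL2' G H Γ Δ φ ψ) Gr Hr Γ Δ ih
  | andR Gr Hr Γ Δ φ ψ h1 h2 ih1 ih2 =>
      simp only [List.append_assoc, List.cons_append, List.nil_append] at ih1 ih2 ⊢
      exact step2 (fun Γ Δ => (Γ, insert φ Δ)) (fun Γ Δ => (Γ, insert ψ Δ))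
        (fun Γ Δ => (Γ, insert (.and φ ψ) Δ)) (liftsInsR φ) (liftsInsR ψ) (liftsInsR _)
        (fun G H Γ Δ => andR' G H Γ Δ φ ψ) Gr Hr Γ Δ ih1 ih2
  | orL Gr Hr Γ Δ φ ψ h1 h2 ih1 ih2 =>
      simp only [List.append_assoc, List.cons_append, List.nil_append] at ih1 ih2 ⊢
      exact step2 (fun Γ Δ => (insert φ Γ, Δ)) (fun Γ Δ => (insert ψ Γ, Δ))
        (fun Γ Δ => (insert (.or φ ψ) Γ, Δ)) (liftsInsL φ) (liftsInsL ψ) (liftsInsL _)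
        (fun G H Γ Δ => orL' G H Γ Δ φ ψ) Gr Hr Γ Δ ih1 ih2
  | orR1 Gr Hr Γ Δ φ ψ h ih =>
      simp only [List.append_assoc, List.cons_append, List.nil_append] at ih ⊢
      exact step1 (fun Γ Δ => (Γ, insert φ Δ)) (fun Γ Δ => (Γ, insert (.or φ ψ) Δ))
        (liftsInsR φ) (liftsInsR _) (fun G H Γ Δ => orR1' G H Γ Δ φ ψ) Gr Hr Γ Δ ih
  | orR2 Gr Hr Γ Δ φ ψ h ih =>
      simp only [List.append_assoc, List.cons_append, List.nil_append] at ih ⊢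
      exact step1 (fun Γ Δ => (Γ, insert ψ Δ)) (fun Γ Δ => (Γ, insert (.or φ ψ) Δ))
        (liftsInsR ψ) (liftsInsR _) (fun G H Γ Δ => orR2' G H Γ Δ φ ψ) Gr Hr Γ Δ ih
  | boxL Gr Hr Γ Δ Sg Λ φ h ih =>
      intro G G' Γ₁ Δ₁ Γ₂ Δ₂ hK
      simp only [List.append_assoc, List.cons_append, List.nil_append] at hK
      rcases decompP hK with ⟨C, hG, hB⟩ | ⟨hA, hx, hB⟩ | ⟨hA, hx, hB⟩ | ⟨C, hA, hB⟩
      · cases C with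
        | nil =>
            simp at hB
            obtain ⟨⟨e1, e2⟩, hHr⟩ := hB
            subst e1; subst e2
            have h1 := ih (Gr ++ [(Γ, Δ)]) G' (insert φ Sg) Λ Γ₂ Δ₂ (by simp [hHr])
            rw [Finset.insert_union] at h1
            have h2 := boxL' Gr G' Γ Δ (Sg ∪ Γ₂) (Λ ∪ Δ₂) φ (by simpa using h1)
            simpa [hG] using h2
        | cons c Ct =>
            simp at hB
            obtain ⟨hc, hHr⟩ := hB
            have h1 := ih (Gr ++ (Γ, Δ) :: (insert φ Sg, Λ) :: Ct) G' Γ₁ Δ₁ Γ₂ Δ₂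
              (by simp [hHr])
            have h2 := boxL' Gr (Ct ++ (Γ₁ ∪ Γ₂, Δ₁ ∪ Δ₂) :: G') Γ Δ Sg Λ φ
              (by simpa using h1)
            simpa [hG, ← hc] using h2
      · rw [Prod.mk.injEq] at hx
        obtain ⟨e1, e2⟩ := hx
        subst e1; subst e2
        simp at hB
        obtain ⟨⟨e3, e4⟩, hHr⟩ := hB
        subst e3; subst e4
        have h1 := ih G G' Γ Δ (insert φ Sg) Λ (by simp [hA, hHr])
        rw [Finset.union_insert] at h1
        have h2 := tRule' G G' (Γ ∪ Sg) (Δ ∪ Λ) φ h1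
        simpa [Finset.insert_union] using h2
      · rw [Prod.mk.injEq] at hx
        obtain ⟨e1, e2⟩ := hx
        subst e1; subst e2
        have h1 := ih G ((insert φ Sg, Λ) :: Hr) Γ₁ Δ₁ Γ Δ (by simp [hA])
        have h2 := boxL' G Hr (Γ₁ ∪ Γ) (Δ₁ ∪ Δ) Sg Λ φ h1
        simpa [← hB, Finset.union_insert] using h2
      · have h1 := ih G (C ++ (Γ, Δ) :: (insert φ Sg, Λ) :: Hr) Γ₁ Δ₁ Γ₂ Δ₂
          (by simp [hA])
        have h2 := boxL' (G ++ (Γ₁ ∪ Γ₂, Δ₁ ∪ Δ₂) :: C) Hr Γ Δ Sg Λ φ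
          (by simpa using h1)
        simpa [hB] using h2
  | boxR Gr Γ Δ φ h ih =>
      intro G G' Γ₁ Δ₁ Γ₂ Δ₂ hK
      rcases decompP hK with ⟨C, hG, hB⟩ | ⟨hA, hx, hB⟩ | ⟨hA, hx, hB⟩ | ⟨C, hA, hB⟩
      · simp at hB
      · simp at hB
      · rw [Prod.mk.injEq] at hx
        obtain ⟨e1, e2⟩ := hx
        subst e1; subst e2
        have h1 := ih G [((∅ : Finset Fm), ({φ} : Finset Fm))] Γ₁ Δ₁ Γ Δ
          (by simp [hA])
        have h2 := Der.boxR G (Γ₁ ∪ Γ) (Δ₁ ∪ Δ) φ (by simpa using h1)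
        simpa [← hB, Finset.union_insert] using h2
      · have h1 := ih G (C ++ [(Γ, Δ), ((∅ : Finset Fm), ({φ} : Finset Fm))]) Γ₁ Δ₁ Γ₂ Δ₂
          (by simp [hA])
        have h2 := Der.boxR (G ++ (Γ₁ ∪ Γ₂, Δ₁ ∪ Δ₂) :: C) Γ Δ φ (by simpa using h1)
        simpa [hB] using h2
  | ecR he _ _ _ _ _ _ => simp at he
  | ewRule he _ _ _ _ => simp at he
  | symRule hs Gr h ih =>
      intro G G' Γ₁ Δ₁ Γ₂ Δ₂ hK
      have h0 : Gr = G'.reverse ++ (Γ₂, Δ₂) :: (Γ₁, Δ₁) :: G.reverse := by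
        rw [← List.reverse_reverse Gr, hK]; simp
      have h1 := ih G'.reverse G.reverse Γ₂ Δ₂ Γ₁ Δ₁ h0
      have h2 := Der.symRule rfl _ h1
      rw [Finset.union_comm Γ₂ Γ₁, Finset.union_comm Δ₂ Δ₁] at h2
      simpa using h2
  | tRule ht Gr Hr Γ Δ φ h ih =>
      simp only [List.append_assoc, List.cons_append, List.nil_append] at ih ⊢
      exact step1 (fun Γ Δ => (insert φ Γ, Δ)) (fun Γ Δ => (insert (.box φ) Γ, Δ))
        (liftsInsL φ) (liftsInsL _) (fun G H Γ Δ => tRule' G H Γ Δ φ) Gr Hr Γ Δ ih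

/-- Merge is admissible in RTB. -/
theorem merge_admissible_RTB :
    ∀ (G G' : Hyp) (Γ₁ Δ₁ Γ₂ Δ₂ : Finset Fm),
      RTB (G ++ [(Γ₁, Δ₁), (Γ₂, Δ₂)] ++ G') →
      RTB (G ++ [(Γ₁ ∪ Γ₂, Δ₁ ∪ Δ₂)] ++ G') := by
  intro G G' Γ₁ Δ₁ Γ₂ Δ₂ h
  have := merge_aux h G G' Γ₁ Δ₁ Γ₂ Δ₂ (by simp)
  simpa using this
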